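/- The set of permutations of [n] avoiding 132, 213, and 321 is exactly {π_{k,n−k} : 1 ≤ k ≤ n}, where π_{k,ℓ} := (ℓ+1, ..., ℓ+k, 1, ..., ℓ); in particular there are exactly n such permutations. -/

import Mathlib

/-- An occurrence of the pattern `σ` in `π` is a strictly increasing choice of
indices whose images under `π` are order-isomorphic to `σ`. -/
def IsOccurrence {m n : ℕ} (σ : Equiv.Perm (Fin m)) (π : Equiv.Perm (Fin n))
    (f : Fin m → Fin n) : Prop :=
  StrictMono f ∧ ∀ j k : Fin m, π (f j) < π (f k) ↔ σ j < σ k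

/-- `numOcc σ π` is the number of occurrences of the pattern `σ` in `π`. -/
noncomputable def numOcc {m n : ℕ} (σ : Equiv.Perm (Fin m)) (π : Equiv.Perm (Fin n)) : ℕ :=
  Nat.card {f : Fin m → Fin n // IsOccurrence σ π f}

def p123 : Equiv.Perm (Fin 3) := 1
def p132 : Equiv.Perm (Fin 3) := Equiv.swap 1 2
def p213 : Equiv.Perm (Fin 3) := Equiv.swap 0 1
def p321 : Equiv.Perm (Fin 3) := Equiv.swap 0 2
def p231 : Equiv.Perm (Fin 3) := finRotate 3
def p312 : Equiv.Perm (Fin 3) := (finRotate 3)⁻¹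

/-- The permutation `(ℓ+1, …, ℓ+k, 1, …, ℓ)` of `[k+ℓ]`. -/
def rotBlock (k ℓ : ℕ) : Equiv.Perm (Fin (k + ℓ)) :=
  finSumFinEquiv.symm.trans ((Equiv.sumComm (Fin k) (Fin ℓ)).trans
    (finSumFinEquiv.trans (finCongr (Nat.add_comm ℓ k))))


/-!
Call positions `i < i + 1` adjacent. If `π` avoids 132 and 213, no value lies strictly between
`π i < π (i + 1)`: the position of such a value, left or right of the pair, would complete a 213
or a 132. If moreover `π` avoids 321, a descent `π i > π (i + 1)` forces `π i` to be the maximum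
and `π (i + 1)` the minimum, by the same argument with 213, 321 resp. 132, 321. So in both cases
`π (i + 1) = π i + 1` in `Fin n` read cyclically, and `π` is the rotation `x ↦ x + π 0`.
Conversely a rotation is two increasing runs with the first above the second, which contains none
of the three patterns, and `rotBlock k ℓ` is the rotation by `ℓ`.
-/

open Equiv

section Patterns

variable {m n : ℕ} (π : Perm (Fin n))

theorem isOccurrence_iff_strictMono (σ : Perm (Fin m)) (f : Fin m → Fin n) :
    IsOccurrence σ π f ↔ StrictMono f ∧ StrictMono (π ∘ f ∘ σ.symm) := by
  refine and_congr_right fun _ => ⟨fun h x y hxy => ?_, fun h j k => ?_⟩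
  · simpa using (h (σ.symm x) (σ.symm y)).2 (by simpa using hxy)
  · simpa using h.lt_iff_lt (a := σ j) (b := σ k)

theorem numOcc_eq_zero_iff (σ : Perm (Fin m)) : numOcc σ π = 0 ↔ ∀ f, ¬IsOccurrence σ π f := by
  rw [numOcc, Finite.card_eq_zero_iff, isEmpty_subtype]

-- `σ.symm 0, σ.symm 1, σ.symm 2` are the positions of the smallest, middle and largest value.
theorem numOcc_eq_zero_iff_of_three (σ : Perm (Fin 3)) :
    numOcc σ π = 0 ↔ ∀ a b c : Fin n, a < b → b < c →
      ¬(π (![a, b, c] (σ.symm 0)) < π (![a, b, c] (σ.symm 1)) ∧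
        π (![a, b, c] (σ.symm 1)) < π (![a, b, c] (σ.symm 2))) := by
  simp only [numOcc_eq_zero_iff, isOccurrence_iff_strictMono, Fin.strictMono_iff_lt_succ]
  constructor
  · intro h a b c hab hbc hπ
    refine h ![a, b, c] ⟨?_, ?_⟩
    · simp [Fin.forall_fin_two, hab, hbc]
    · simpa [Fin.forall_fin_two] using hπ
  · rintro h f ⟨hf, hπ⟩
    simp only [Fin.forall_fin_two] at hf hπ
    have hf_eq : f = ![f 0, f 1, f 2] := by ext i; fin_cases i <;> rfl
    exact h _ _ _ hf.1 hf.2 (hf_eq ▸ hπ)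

theorem numOcc_p132_eq_zero_iff :
    numOcc p132 π = 0 ↔ ∀ a b c : Fin n, a < b → b < c → ¬(π a < π c ∧ π c < π b) := by
  rw [numOcc_eq_zero_iff_of_three]
  simp [p132, swap_apply_of_ne_of_ne]

theorem numOcc_p213_eq_zero_iff :
    numOcc p213 π = 0 ↔ ∀ a b c : Fin n, a < b → b < c → ¬(π b < π a ∧ π a < π c) := by
  rw [numOcc_eq_zero_iff_of_three]
  simp [p213, swap_apply_of_ne_of_ne]

theorem numOcc_p321_eq_zero_iff :
    numOcc p321 π = 0 ↔ ∀ a b c : Fin n, a < b → b < c → ¬(π c < π b ∧ π b < π a) := by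
  rw [numOcc_eq_zero_iff_of_three]
  simp [p321, swap_apply_of_ne_of_ne]

end Patterns

theorem numOcc_addRight_eq_zero {n : ℕ} [NeZero n] (c : Fin n) :
    numOcc p132 (Equiv.addRight c) = 0 ∧ numOcc p213 (Equiv.addRight c) = 0 ∧
      numOcc p321 (Equiv.addRight c) = 0 := by
  refine ⟨(numOcc_p132_eq_zero_iff _).2 ?_, (numOcc_p213_eq_zero_iff _).2 ?_,
    (numOcc_p321_eq_zero_iff _).2 ?_⟩ <;>
  · intro a b d
    simp only [coe_addRight]
    fin_omega

section Adjacent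

variable {n : ℕ} {π : Perm (Fin n)} {a b : Fin n}

theorem lt_or_lt_of_adjacent (hab : (a : ℕ) + 1 = b) {j : Fin n} (ha : j ≠ a) (hb : j ≠ b) :
    j < a ∨ b < j := by
  fin_omega

theorem apply_notMem_Ioo_of_adjacent (h132 : numOcc p132 π = 0) (h213 : numOcc p213 π = 0)
    (hab : (a : ℕ) + 1 = b) (j : Fin n) : π j ∉ Set.Ioo (π a) (π b) := by
  rintro ⟨haj, hjb⟩
  rcases lt_or_lt_of_adjacent hab (ne_of_apply_ne π haj.ne') (ne_of_apply_ne π hjb.ne) with hj | hj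
  · exact (numOcc_p213_eq_zero_iff π).1 h213 j a b hj (by fin_omega) ⟨haj, hjb⟩
  · exact (numOcc_p132_eq_zero_iff π).1 h132 a b j (by fin_omega) hj ⟨haj, hjb⟩

theorem apply_le_apply_left_of_adjacent_descent (h213 : numOcc p213 π = 0)
    (h321 : numOcc p321 π = 0) (hab : (a : ℕ) + 1 = b) (hba : π b < π a) (j : Fin n) :
    π j ≤ π a := by
  by_contra! haj
  rcases lt_or_lt_of_adjacent hab (ne_of_apply_ne π haj.ne') (ne_of_apply_ne π (hba.trans haj).ne')
    with hj | hj
  · exact (numOcc_p321_eq_zero_iff π).1 h321 j a b hj (by fin_omega) ⟨hba, haj⟩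
  · exact (numOcc_p213_eq_zero_iff π).1 h213 a b j (by fin_omega) hj ⟨hba, haj⟩

theorem apply_right_le_apply_of_adjacent_descent (h132 : numOcc p132 π = 0)
    (h321 : numOcc p321 π = 0) (hab : (a : ℕ) + 1 = b) (hba : π b < π a) (j : Fin n) :
    π b ≤ π j := by
  by_contra! hjb
  rcases lt_or_lt_of_adjacent hab (ne_of_apply_ne π (hjb.trans hba).ne) (ne_of_apply_ne π hjb.ne)
    with hj | hj
  · exact (numOcc_p132_eq_zero_iff π).1 h132 j a b hj (by fin_omega) ⟨hjb, hba⟩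
  · exact (numOcc_p321_eq_zero_iff π).1 h321 a b j (by fin_omega) hj ⟨hjb, hba⟩

end Adjacent

section Rotation

variable {n : ℕ} {π : Perm (Fin (n + 1))}

theorem apply_succ_eq_apply_castSucc_add_one (h132 : numOcc p132 π = 0)
    (h213 : numOcc p213 π = 0) (h321 : numOcc p321 π = 0) (i : Fin n) :
    π i.succ = π i.castSucc + 1 := by
  have hadj : (i.castSucc : ℕ) + 1 = i.succ := rfl
  rcases lt_or_gt_of_ne (π.injective.ne Fin.castSucc_lt_succ.ne) with hup | hdown
  · have hnext := apply_notMem_Ioo_of_adjacent h132 h213 hadj (π.symm (π i.castSucc + 1))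
    rw [apply_symm_apply, Set.mem_Ioo, not_and, not_lt] at hnext
    exact le_antisymm (hnext (Fin.lt_add_one_iff.2 (hup.trans_le (Fin.le_last _))))
      (Fin.add_one_le_of_lt hup)
  · have hlast := apply_le_apply_left_of_adjacent_descent h213 h321 hadj hdown
      (π.symm (Fin.last n))
    have hzero := apply_right_le_apply_of_adjacent_descent h132 h321 hadj hdown (π.symm 0)
    rw [apply_symm_apply] at hlast hzero
    rw [nonpos_iff_eq_zero.1 hzero, Fin.last_le_iff.1 hlast, Fin.last_add_one]

theorem eq_addRight_of_avoids (h132 : numOcc p132 π = 0) (h213 : numOcc p213 π = 0)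
    (h321 : numOcc p321 π = 0) : π = Equiv.addRight (π 0) := by
  ext1 i
  induction i using Fin.induction with
  | zero => simp
  | succ i ih =>
    rw [apply_succ_eq_apply_castSucc_add_one h132 h213 h321, ih, ← Fin.coeSucc_eq_succ]
    simp only [coe_addRight]
    abel

variable (π) in
theorem avoids_iff_mem_range_addRight :
    (numOcc p132 π = 0 ∧ numOcc p213 π = 0 ∧ numOcc p321 π = 0) ↔
      π ∈ Set.range Equiv.addRight := by
  refine ⟨fun ⟨h132, h213, h321⟩ => ⟨π 0, (eq_addRight_of_avoids h132 h213 h321).symm⟩, ?_⟩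
  rintro ⟨c, rfl⟩
  exact numOcc_addRight_eq_zero c

end Rotation

theorem rotBlock_apply_val {k ℓ : ℕ} (i : Fin (k + ℓ)) :
    (rotBlock k ℓ i : ℕ) = if (i : ℕ) < k then i + ℓ else i - k := by
  induction i using Fin.addCases with
  | left i => simp [rotBlock, add_comm]
  | right j => simp [rotBlock]

theorem finCongr_permCongr_rotBlock {k ℓ n : ℕ} (hk : 0 < k) (h : k + ℓ = n + 1) :
    (finCongr h).permCongr (rotBlock k ℓ) = Equiv.addRight ⟨ℓ, by omega⟩ := by
  ext x
  rw [permCongr_apply, coe_addRight, Fin.val_add_eq_ite]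
  simp only [finCongr_apply, Fin.val_cast, rotBlock_apply_val, finCongr_symm]
  split_ifs <;> omega

theorem Equiv.addRight_injective {G : Type*} [AddGroup G] :
    Function.Injective (Equiv.addRight : G → Perm G) := fun c d h => by
  simpa using congr($h 0)

theorem avoid_132_213_321_characterization (n : ℕ) (hn : 1 ≤ n) :
    (∀ π : Equiv.Perm (Fin n),
      (numOcc p132 π = 0 ∧ numOcc p213 π = 0 ∧ numOcc p321 π = 0) ↔
        ∃ k ℓ : ℕ, 1 ≤ k ∧ ∃ h : k + ℓ = n,
          π = (finCongr h).permCongr (rotBlock k ℓ)) ∧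
    Nat.card {π : Equiv.Perm (Fin n) //
        numOcc p132 π = 0 ∧ numOcc p213 π = 0 ∧ numOcc p321 π = 0} = n := by
  obtain ⟨m, rfl⟩ := Nat.exists_eq_add_of_le' hn
  refine ⟨fun π => (avoids_iff_mem_range_addRight π).trans ⟨?_, ?_⟩, ?_⟩
  · rintro ⟨c, rfl⟩
    exact ⟨m + 1 - c, c, by omega, by omega, (finCongr_permCongr_rotBlock (by omega) _).symm⟩
  · rintro ⟨k, ℓ, hk, h, rfl⟩
    exact ⟨_, (finCongr_permCongr_rotBlock hk h).symm⟩
  · calc _ = Nat.card (Set.range (Equiv.addRight : Fin (m + 1) → Perm (Fin (m + 1)))) :=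
          Nat.card_congr (Equiv.subtypeEquivRight avoids_iff_mem_range_addRight)
      _ = m + 1 := by rw [Nat.card_range_of_injective Equiv.addRight_injective, Nat.card_fin]
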